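/- arXiv:2005.08632 — 2 statements merged into one kernel-verified Lean document; each statement's English description precedes it below -/
import Mathlib

section
/- Let μ be a probability measure on ℝ^d, let f : ℝ^d → Fin k be a classifier, and let A : ℝ^d → ℝ^d be an attack map with A(x) ≠ 0 for all x and ε := sup_x ‖A(x)‖ < ∞. Let v be a unit eigenvector of M = E[(A(X)/‖A(X)‖)(A(X)/‖A(X)‖)ᵀ] with top eigenvalue λ, and fix 0 < δ < 1 with δ² < λ. Assume that for every x with f(x + A(x)) ≠ f(x) and every z with ⟨z, A(x)⟩ ≥ ‖A(x)‖², we have f(x + z) ≠ f(x). Then with u = (ε/δ)v, P[f(X + u) ≠ f(X) or f(X − u) ≠ f(X)] ≥ P[f(X + A(X)) ≠ f(X)] − (1 − λ)/(1 − δ²). -/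
/-!
Write `c x = ⟪A x / ‖A x‖, v⟫`, so that `λ = E[c²]` and `|c| ≤ 1`. Wherever `|c x| ≥ δ`, one of
`±(ε/δ) v` has inner product at least `ε ‖A x‖ ≥ ‖A x‖²` with `A x`, so the half-space hypothesis
makes the universal perturbation `u` or `-u` succeed wherever `A` does. The remaining points,
where `c² ≤ δ²`, have probability at most `(1 - λ)/(1 - δ²)` by Markov's inequality for `1 - c²`.
-/

open MeasureTheory RealInnerProductSpace

section InnerProduct

variable {E : Type*} [NormedAddCommGroup E] [InnerProductSpace ℝ E]

lemma abs_inner_inv_norm_smul_le (a v : E) : |⟪‖a‖⁻¹ • a, v⟫| ≤ ‖v‖ := by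
  refine (abs_real_inner_le_norm _ v).trans (mul_le_of_le_one_left (norm_nonneg v) ?_)
  rw [norm_smul, norm_inv, norm_norm]
  exact inv_mul_le_one_of_le₀ le_rfl (norm_nonneg a)

lemma sq_norm_le_inner_div_smul {a v : E} {ε δ : ℝ} (hε : ‖a‖ ≤ ε) (hδ : 0 < δ)
    (hc : δ ≤ ⟪‖a‖⁻¹ • a, v⟫) : ‖a‖ ^ 2 ≤ ⟪(ε / δ) • v, a⟫ := by
  have hinner : ⟪v, a⟫ = ‖a‖ * ⟪‖a‖⁻¹ • a, v⟫ := by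
    rcases eq_or_ne a 0 with rfl | ha
    · simp
    · rw [real_inner_smul_left, real_inner_comm, mul_inv_cancel_left₀ (norm_ne_zero_iff.2 ha)]
  have hεδ : 0 ≤ ε / δ := div_nonneg ((norm_nonneg a).trans hε) hδ.le
  calc ‖a‖ ^ 2 ≤ ε * ‖a‖ := by rw [sq]; exact mul_le_mul_of_nonneg_right hε (norm_nonneg a)
    _ = ε / δ * (‖a‖ * δ) := by field_simp
    _ ≤ ε / δ * (‖a‖ * ⟪‖a‖⁻¹ • a, v⟫) := by gcongr
    _ = ⟪(ε / δ) • v, a⟫ := by rw [← hinner, real_inner_smul_left]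

lemma sq_norm_le_inner_div_smul_or_neg {a v : E} {ε δ : ℝ} (hε : ‖a‖ ≤ ε) (hδ : 0 < δ)
    (hc : δ ≤ |⟪‖a‖⁻¹ • a, v⟫|) :
    ‖a‖ ^ 2 ≤ ⟪(ε / δ) • v, a⟫ ∨ ‖a‖ ^ 2 ≤ ⟪-((ε / δ) • v), a⟫ := by
  rcases le_abs.1 hc with hpos | hneg
  · exact Or.inl (sq_norm_le_inner_div_smul hε hδ hpos)
  · right
    rw [← smul_neg]
    exact sq_norm_le_inner_div_smul hε hδ (by rwa [inner_neg_right])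

end InnerProduct

lemma measureReal_le_le_one_sub_integral_div {α : Type*} [MeasurableSpace α] {μ : Measure α}
    [IsProbabilityMeasure μ] {h : α → ℝ} (h_le : ∀ x, h x ≤ 1) (h_int : Integrable h μ) {t : ℝ}
    (ht : t < 1) : μ.real {x | h x ≤ t} ≤ (1 - ∫ x, h x ∂μ) / (1 - t) := by
  have hmarkov := mul_meas_ge_le_integral_of_nonneg
    (Filter.Eventually.of_forall fun x => sub_nonneg.2 (h_le x))
    ((integrable_const 1).sub h_int) (1 - t)
  have hset : {x | 1 - t ≤ 1 - h x} = {x | h x ≤ t} :=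
    Set.ext fun x => sub_le_sub_iff_left (1 : ℝ)
  rw [hset, integral_sub (integrable_const 1) h_int, integral_const, probReal_univ,
    one_smul] at hmarkov
  rw [le_div_iff₀ (sub_pos.2 ht), mul_comm]
  exact hmarkov

theorem stmt2_general {d k : ℕ} (μ : Measure (EuclideanSpace ℝ (Fin d))) [IsProbabilityMeasure μ]
    (f : EuclideanSpace ℝ (Fin d) → Fin k)
    (A : EuclideanSpace ℝ (Fin d) → EuclideanSpace ℝ (Fin d))
    (ε : ℝ) (hbdd : ∀ x, ‖A x‖ ≤ ε)
    (v : EuclideanSpace ℝ (Fin d)) (hv : ‖v‖ = 1)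
    (lam : ℝ) (hlam : lam = ∫ x, (⟪‖A x‖⁻¹ • A x, v⟫) ^ 2 ∂μ)
    (δ : ℝ) (hδ0 : 0 < δ) (hδ1 : δ < 1) (hdlam : δ ^ 2 < lam)
    (hhalf : ∀ x, f (x + A x) ≠ f x →
      ∀ z, ‖A x‖ ^ 2 ≤ ⟪z, A x⟫ → f (x + z) ≠ f x) :
    (μ {x | f (x + A x) ≠ f x}).toReal - (1 - lam) / (1 - δ ^ 2) ≤
      (μ {x | f (x + (ε / δ) • v) ≠ f x ∨ f (x - (ε / δ) • v) ≠ f x}).toReal := by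
  set c : EuclideanSpace ℝ (Fin d) → ℝ := fun x => ⟪‖A x‖⁻¹ • A x, v⟫
  have hc_sq : ∀ x, c x ^ 2 ≤ 1 := fun x => by
    rw [sq_le_one_iff_abs_le_one, ← hv]; exact abs_inner_inv_norm_smul_le (A x) v
  have hc_int : Integrable (fun x => c x ^ 2) μ := by
    -- otherwise the Bochner integral is `0`, contradicting `δ ^ 2 < lam`
    by_contra h
    rw [integral_undef h] at hlam
    nlinarith
  have hcover : {x | f (x + A x) ≠ f x} ⊆
      {x | f (x + (ε / δ) • v) ≠ f x ∨ f (x - (ε / δ) • v) ≠ f x} ∪ {x | c x ^ 2 ≤ δ ^ 2} := by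
    intro x hx
    by_cases hsmall : c x ^ 2 ≤ δ ^ 2
    · exact Or.inr hsmall
    have hδc : δ ≤ |c x| := by
      rw [not_le, sq_lt_sq, abs_of_pos hδ0] at hsmall; exact hsmall.le
    rcases sq_norm_le_inner_div_smul_or_neg (hbdd x) hδ0 hδc with hplus | hminus
    · exact Or.inl (Or.inl (hhalf x hx _ hplus))
    · exact Or.inl (Or.inr (by simpa only [← sub_eq_add_neg] using hhalf x hx _ hminus))
  have hbad := measureReal_le_le_one_sub_integral_div hc_sq hc_int (t := δ ^ 2) (by nlinarith)
  rw [← hlam] at hbad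
  have hunion := (measureReal_mono (μ := μ) hcover).trans (measureReal_union_le _ _)
  simp only [measureReal_def] at hbad hunion
  linarith

theorem stmt2 {d k : ℕ} (μ : Measure (EuclideanSpace ℝ (Fin d))) [IsProbabilityMeasure μ]
    (f : EuclideanSpace ℝ (Fin d) → Fin k)
    (A : EuclideanSpace ℝ (Fin d) → EuclideanSpace ℝ (Fin d))
    (hA : ∀ x, A x ≠ 0)
    (ε : ℝ) (hεdef : ε = ⨆ x, ‖A x‖) (hbdd : ∀ x, ‖A x‖ ≤ ε)
    (v : EuclideanSpace ℝ (Fin d)) (hv : ‖v‖ = 1)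
    (lam : ℝ) (hlam : lam = ∫ x, (⟪‖A x‖⁻¹ • A x, v⟫) ^ 2 ∂μ)
    (δ : ℝ) (hδ0 : 0 < δ) (hδ1 : δ < 1) (hdlam : δ ^ 2 < lam)
    (hhalf : ∀ x, f (x + A x) ≠ f x →
      ∀ z, ‖A x‖ ^ 2 ≤ ⟪z, A x⟫ → f (x + z) ≠ f x) :
    (μ {x | f (x + A x) ≠ f x}).toReal - (1 - lam) / (1 - δ ^ 2) ≤
      (μ {x | f (x + (ε / δ) • v) ≠ f x ∨ f (x - (ε / δ) • v) ≠ f x}).toReal :=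
  stmt2_general μ f A ε hbdd v hv lam hlam δ hδ0 hδ1 hdlam hhalf
end

section
/- Let A and B be real symmetric d×d matrices such that the top eigenvalue of A is separated from the second: λ_1(A) − λ_2(A) ≥ γ > 0. Let v and w be unit top eigenvectors of A and B respectively. Then there exists a sign s ∈ {−1, 1} such that ‖v − s·w‖ ≤ 2^{3/2}·‖A − B‖/γ. (Davis–Kahan corollary.) -/
/-!
The top eigenvalues of `A` and `B` differ by at most `‖A - B‖` (compare Rayleigh quotients), so the
residual `λ₁(A) w - A w = (λ₁(A) - λ₁(B)) w + (B - A) w` has norm at most `2 ‖A - B‖`. Expanding `w`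
in an orthonormal eigenbasis of `A`, every coordinate except the one along the simple top
eigenvector `v` is multiplied by a factor of size at least `γ`, whence
`γ² (1 - ⟪v, w⟫²) ≤ 4 ‖A - B‖²`. Taking `s` to be the sign of `⟪v, w⟫` gives
`‖v - s w‖² = 2 - 2 |⟪v, w⟫| ≤ 2 (1 - ⟪v, w⟫²)`.
-/

open scoped InnerProductSpace Matrix.Norms.L2Operator

section Eigenbasis

variable {ι E : Type*} [Fintype ι] [NormedAddCommGroup E] [InnerProductSpace ℝ E]
  {T : E →L[ℝ] E} {b : OrthonormalBasis ι ℝ E} {μ : ι → ℝ}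

theorem inner_basis_apply_of_apply_basis (hb : ∀ i, T (b i) = μ i • b i) (i : ι) (x : E) :
    ⟪b i, T x⟫_ℝ = μ i * ⟪b i, x⟫_ℝ := by
  classical
  conv_lhs => rw [← b.sum_repr' x]
  simp only [map_sum, map_smul, hb, inner_sum, inner_smul_right, b.inner_eq_ite,
    mul_ite, mul_one, mul_zero, Finset.sum_ite_eq, Finset.mem_univ, if_true]
  ring

theorem inner_apply_self_eq_sum_of_apply_basis (hb : ∀ i, T (b i) = μ i • b i) (x : E) :
    ⟪x, T x⟫_ℝ = ∑ i, μ i * ⟪b i, x⟫_ℝ ^ 2 := by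
  rw [← b.sum_inner_mul_inner]
  refine Finset.sum_congr rfl fun i _ => ?_
  rw [inner_basis_apply_of_apply_basis hb, ← real_inner_comm x (b i)]
  ring

theorem inner_apply_self_le_of_apply_basis (hb : ∀ i, T (b i) = μ i • b i) {L : ℝ}
    (hL : ∀ i, μ i ≤ L) (x : E) : ⟪x, T x⟫_ℝ ≤ L * ‖x‖ ^ 2 := by
  rw [inner_apply_self_eq_sum_of_apply_basis hb, ← b.sum_sq_inner_right, Finset.mul_sum]
  exact Finset.sum_le_sum fun i _ => mul_le_mul_of_nonneg_right (hL i) (sq_nonneg _)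

theorem norm_smul_sub_apply_sq_of_apply_basis (hb : ∀ i, T (b i) = μ i • b i) (c : ℝ) (x : E) :
    ‖c • x - T x‖ ^ 2 = ∑ i, (c - μ i) ^ 2 * ⟪b i, x⟫_ℝ ^ 2 := by
  rw [← b.sum_sq_inner_right]
  refine Finset.sum_congr rfl fun i _ => ?_
  rw [inner_sub_right, real_inner_smul_right, inner_basis_apply_of_apply_basis hb]
  ring

theorem inner_basis_eq_zero_of_apply_eq_smul (hb : ∀ i, T (b i) = μ i • b i) {lam : ℝ} {v : E}
    (hTv : T v = lam • v) {i : ι} (hi : μ i ≠ lam) : ⟪b i, v⟫_ℝ = 0 := by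
  have h := inner_basis_apply_of_apply_basis hb i v
  rw [hTv, real_inner_smul_right] at h
  exact (mul_eq_mul_right_iff.mp h).resolve_left hi.symm

theorem inner_sq_eq_inner_basis_sq_of_apply_eq_smul (hb : ∀ i, T (b i) = μ i • b i) {i₀ : ι}
    {lam : ℝ} (hsimple : ∀ i ≠ i₀, μ i ≠ lam) {v : E} (hv : ‖v‖ = 1) (hTv : T v = lam • v)
    (w : E) : ⟪v, w⟫_ℝ ^ 2 = ⟪b i₀, w⟫_ℝ ^ 2 := by
  have hv₀ : ∀ i ≠ i₀, ⟪b i, v⟫_ℝ = 0 := fun i hi =>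
    inner_basis_eq_zero_of_apply_eq_smul hb hTv (hsimple i hi)
  have hvv : ⟪b i₀, v⟫_ℝ ^ 2 = 1 := by
    rw [← one_pow 2, ← hv, ← b.sum_sq_inner_right,
      Finset.sum_eq_single i₀ (fun i _ hi => by rw [hv₀ i hi]; ring) (by simp)]
  rw [← b.sum_inner_mul_inner,
    Finset.sum_eq_single i₀ (fun i _ hi => by rw [real_inner_comm, hv₀ i hi, zero_mul]) (by simp),
    real_inner_comm, mul_pow, hvv, one_mul]

theorem sq_mul_sub_inner_basis_sq_le (hb : ∀ i, T (b i) = μ i • b i) {i₀ : ι} {lam γ : ℝ}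
    (hγ : 0 ≤ γ) (hgap : ∀ i ≠ i₀, μ i ≤ lam - γ) (w : E) :
    γ ^ 2 * (‖w‖ ^ 2 - ⟪b i₀, w⟫_ℝ ^ 2) ≤ ‖lam • w - T w‖ ^ 2 := by
  classical
  rw [← b.sum_sq_inner_right, ← Finset.add_sum_erase _ _ (Finset.mem_univ i₀), add_sub_cancel_left,
    Finset.mul_sum, norm_smul_sub_apply_sq_of_apply_basis hb]
  calc ∑ i ∈ Finset.univ.erase i₀, γ ^ 2 * ⟪b i, w⟫_ℝ ^ 2
      ≤ ∑ i ∈ Finset.univ.erase i₀, (lam - μ i) ^ 2 * ⟪b i, w⟫_ℝ ^ 2 := by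
        refine Finset.sum_le_sum fun i hi => mul_le_mul_of_nonneg_right ?_ (sq_nonneg _)
        have := hgap i (Finset.ne_of_mem_erase hi)
        nlinarith
    _ ≤ ∑ i, (lam - μ i) ^ 2 * ⟪b i, w⟫_ℝ ^ 2 :=
        Finset.sum_le_sum_of_subset_of_nonneg (Finset.erase_subset _ _) fun i _ _ => by positivity

end Eigenbasis

section Perturbation

variable {E : Type*} [NormedAddCommGroup E] [InnerProductSpace ℝ E]

theorem inner_apply_self_le_opNorm (T : E →L[ℝ] E) (x : E) : ⟪x, T x⟫_ℝ ≤ ‖T‖ * ‖x‖ ^ 2 :=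
  calc ⟪x, T x⟫_ℝ ≤ ‖x‖ * ‖T x‖ := real_inner_le_norm _ _
    _ ≤ ‖x‖ * (‖T‖ * ‖x‖) := by gcongr; exact T.le_opNorm x
    _ = ‖T‖ * ‖x‖ ^ 2 := by ring

theorem sub_le_opNorm_sub_of_apply_eq_smul {κ : Type*} [Fintype κ] {T S : E →L[ℝ] E}
    {b : OrthonormalBasis κ ℝ E} {μ : κ → ℝ} (hb : ∀ j, S (b j) = μ j • b j) {lam lam' : ℝ}
    (htop : ∀ j, μ j ≤ lam') {v : E} (hv : ‖v‖ = 1) (hTv : T v = lam • v) :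
    lam - lam' ≤ ‖T - S‖ := by
  have hT : ⟪v, T v⟫_ℝ = lam := by
    rw [hTv, real_inner_smul_right, real_inner_self_eq_norm_sq, hv]; ring
  have hS := inner_apply_self_le_of_apply_basis hb htop v
  have hTS := inner_apply_self_le_opNorm (T - S) v
  rw [sub_apply, inner_sub_right, hT] at hTS
  rw [hv] at hS hTS
  linarith

theorem norm_smul_sub_apply_le (T S : E →L[ℝ] E) {lam' : ℝ} {w : E} (hSw : S w = lam' • w)
    (lam : ℝ) : ‖lam • w - T w‖ ≤ (|lam - lam'| + ‖T - S‖) * ‖w‖ := by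
  have h : lam • w - T w = (lam - lam') • w + (S - T) w := by
    rw [sub_apply, hSw]; module
  calc ‖lam • w - T w‖ ≤ ‖(lam - lam') • w‖ + ‖(S - T) w‖ := h ▸ norm_add_le _ _
    _ ≤ |lam - lam'| * ‖w‖ + ‖S - T‖ * ‖w‖ := by
        rw [norm_smul, Real.norm_eq_abs]; gcongr; exact (S - T).le_opNorm w
    _ = (|lam - lam'| + ‖T - S‖) * ‖w‖ := by rw [norm_sub_rev]; ring

theorem exists_sign_norm_sub_smul_sq_le {v w : E} (hv : ‖v‖ = 1) (hw : ‖w‖ = 1) :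
    ∃ s : ℝ, (s = 1 ∨ s = -1) ∧ ‖v - s • w‖ ^ 2 ≤ 2 * (1 - ⟪v, w⟫_ℝ ^ 2) := by
  have h := abs_real_inner_le_norm v w
  rw [hv, hw, one_mul, abs_le] at h
  rcases le_total 0 ⟪v, w⟫_ℝ with hvw | hvw
  · refine ⟨1, .inl rfl, ?_⟩
    rw [one_smul, norm_sub_sq_real, hv, hw]
    nlinarith
  · refine ⟨-1, .inr rfl, ?_⟩
    rw [neg_one_smul, sub_neg_eq_add, norm_add_sq_real, hv, hw]
    nlinarith

theorem exists_sign_norm_sub_smul_le_of_eigengap {ι κ : Type*} [Fintype ι] [Fintype κ]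
    {T S : E →L[ℝ] E}
    {b : OrthonormalBasis ι ℝ E} {b' : OrthonormalBasis κ ℝ E} {μ : ι → ℝ} {μ' : κ → ℝ}
    (hb : ∀ i, T (b i) = μ i • b i) (hb' : ∀ j, S (b' j) = μ' j • b' j)
    {i₀ : ι} {lam lam' γ : ℝ} (hγ : 0 < γ) (htop : ∀ i, μ i ≤ lam)
    (hgap : ∀ i ≠ i₀, μ i ≤ lam - γ) (htop' : ∀ j, μ' j ≤ lam')
    {v w : E} (hv : ‖v‖ = 1) (hw : ‖w‖ = 1) (hTv : T v = lam • v) (hSw : S w = lam' • w) :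
    ∃ s : ℝ, (s = 1 ∨ s = -1) ∧ ‖v - s • w‖ ≤ 2 ^ ((3 : ℝ) / 2) * ‖T - S‖ / γ := by
  have hweyl : |lam - lam'| ≤ ‖T - S‖ := abs_sub_le_iff.2
    ⟨sub_le_opNorm_sub_of_apply_eq_smul hb' htop' hv hTv,
      by rw [norm_sub_rev]; exact sub_le_opNorm_sub_of_apply_eq_smul hb htop hw hSw⟩
  have hres : ‖lam • w - T w‖ ≤ 2 * ‖T - S‖ := by
    have := norm_smul_sub_apply_le T S hSw lam
    rw [hw, mul_one] at this
    linarith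
  have hsin : γ ^ 2 * (1 - ⟪v, w⟫_ℝ ^ 2) ≤ 4 * ‖T - S‖ ^ 2 := by
    have hsimple : ∀ i ≠ i₀, μ i ≠ lam := fun i hi => by linarith [hgap i hi]
    have h := sq_mul_sub_inner_basis_sq_le hb hγ.le hgap w
    rw [← inner_sq_eq_inner_basis_sq_of_apply_eq_smul hb hsimple hv hTv, hw, one_pow] at h
    nlinarith [norm_nonneg (lam • w - T w)]
  obtain ⟨s, hs, hnorm⟩ := exists_sign_norm_sub_smul_sq_le hv hw
  refine ⟨s, hs, (sq_le_sq₀ (norm_nonneg _) (by positivity)).1 ?_⟩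
  have h8 : ((2 : ℝ) ^ ((3 : ℝ) / 2)) ^ 2 = 8 := by
    rw [← Real.rpow_natCast, ← Real.rpow_mul (by norm_num)]; norm_num
  rw [div_pow, mul_pow, h8, le_div_iff₀ (by positivity)]
  nlinarith

end Perturbation

theorem Matrix.IsHermitian.toEuclideanCLM_eigenvectorBasis {n : Type*} [Fintype n] [DecidableEq n]
    {A : Matrix n n ℝ} (hA : A.IsHermitian) (i : n) :
    Matrix.toEuclideanCLM (𝕜 := ℝ) A (hA.eigenvectorBasis i) =
      hA.eigenvalues i • hA.eigenvectorBasis i :=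
  WithLp.ofLp_injective 2 (hA.mulVec_eigenvectorBasis i)

theorem Antitone.apply_le_of_comp_perm {α β : Type*} [Preorder α] [Preorder β] {f : α → β}
    {σ : Equiv.Perm α} (h : Antitone (f ∘ σ)) {a i : α} (hi : a ≤ σ.symm i) : f i ≤ f (σ a) := by
  simpa using h hi

theorem stmt7 {d : ℕ} (hd : 1 < d) (A B : Matrix (Fin d) (Fin d) ℝ)
    (hA : A.IsHermitian) (hB : B.IsHermitian)
    (lamA lamB : Fin d → ℝ) (hAsort : Antitone lamA) (hBsort : Antitone lamB)
    (hA' : ∃ σ : Equiv.Perm (Fin d), lamA = hA.eigenvalues ∘ σ)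
    (hB' : ∃ τ : Equiv.Perm (Fin d), lamB = hB.eigenvalues ∘ τ)
    (γ : ℝ) (hγ : 0 < γ)
    (hgap : γ ≤ lamA ⟨0, by omega⟩ - lamA ⟨1, by omega⟩)
    (v w : EuclideanSpace ℝ (Fin d)) (hv : ‖v‖ = 1) (hw : ‖w‖ = 1)
    (hvA : Matrix.toEuclideanLin A v = lamA ⟨0, by omega⟩ • v)
    (hwB : Matrix.toEuclideanLin B w = lamB ⟨0, by omega⟩ • w) :
    ∃ s : ℝ, (s = 1 ∨ s = -1) ∧
      ‖v - s • w‖ ≤ 2 ^ ((3 : ℝ) / 2) * ‖A - B‖ / γ := by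
  obtain ⟨σ, rfl⟩ := hA'
  obtain ⟨τ, rfl⟩ := hB'
  rw [Matrix.cstar_norm_def, map_sub]
  refine exists_sign_norm_sub_smul_le_of_eigengap hA.toEuclideanCLM_eigenvectorBasis
    hB.toEuclideanCLM_eigenvectorBasis (i₀ := σ ⟨0, by omega⟩) hγ
    (fun i => hAsort.apply_le_of_comp_perm (Nat.zero_le _))
    (fun i hi => ?_) (fun j => hBsort.apply_le_of_comp_perm (Nat.zero_le _)) hv hw hvA hwB
  have hi₁ : (⟨1, hd⟩ : Fin d) ≤ σ.symm i := by
    have : σ.symm i ≠ ⟨0, by omega⟩ := fun h => hi (by rw [← h, Equiv.apply_symm_apply])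
    exact Nat.one_le_iff_ne_zero.2 (Fin.val_ne_of_ne this)
  exact (hAsort.apply_le_of_comp_perm hi₁).trans (le_sub_comm.1 hgap)
end
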